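/- arXiv:1602.08502 — 3 statements merged into one kernel-verified Lean document; each statement's English description precedes it below -/
import Mathlib

section
/- Every element of the monoid M = ⟨a, b | ab^n a = aba (n ≥ 2)⟩ is represented by exactly one word in the set N_M = {b^s, b^s u, b^s u b^t : u ∈ U_M, s ≥ 0, t > 0}, where U_M = {a^{i₀} b a^{i₁} b ⋯ b a^{i_k} : k ≥ 0, all i_j ≥ 1}. -/
open Relation

/-- Alphabet for the monoid `M`. -/
inductive AB : Type | a | b

/-- Alphabet for the monoid `N`. -/
inductive CD : Type | c | d

abbrev WM := FreeMonoid AB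
abbrev WN := FreeMonoid CD

def a : WM := FreeMonoid.of AB.a
def b : WM := FreeMonoid.of AB.b
def c : WN := FreeMonoid.of CD.c
def d : WN := FreeMonoid.of CD.d

/-- The defining relation set of `M`: `a b^n a = a b a` for `n ≥ 2`. -/
def rM : WM → WM → Prop := fun x y => ∃ n, 2 ≤ n ∧ x = a * b ^ n * a ∧ y = a * b * a

/-- The defining relation set of `N`. -/
def rN : WN → WN → Prop := fun x y =>
  (x = c * d ^ 2 * c ∨ x = c * d ^ 4 ∨ x = c * d ^ 3 * c ^ 2 ∨ x = c * d ^ 3 * (c * d * c)) ∧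
    y = c * d * c

/-- Single-step rewriting relation of a rewriting system `R`. -/
def Step {α : Type} (R : FreeMonoid α → FreeMonoid α → Prop) (x y : FreeMonoid α) : Prop :=
  ∃ u v p q, R u v ∧ x = p * u * q ∧ y = p * v * q

/-- A word is irreducible if no single-step rewrite applies to it. -/
def Irred {α : Type} (R : FreeMonoid α → FreeMonoid α → Prop) (w : FreeMonoid α) : Prop :=
  ∀ v, ¬ Step R w v

/-- Words `a^{i₀} b a^{i₁} b ⋯ b a^{i_k}` with `k ≥ 0`, all `i_j ≥ 1`. -/
def UM : Set WM :=
  {w | ∃ l : List ℕ, l ≠ [] ∧ (∀ i ∈ l, 1 ≤ i) ∧ w = ((l.map (a ^ ·)).intersperse b).prod}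

/-- Words `c^{i₀} d c^{i₁} d ⋯ d c^{i_k}` with `k ≥ 0`, all `i_j ≥ 1`. -/
def UN : Set WN :=
  {w | ∃ l : List ℕ, l ≠ [] ∧ (∀ i ∈ l, 1 ≤ i) ∧ w = ((l.map (c ^ ·)).intersperse d).prod}

/-- Normal forms for `M`. -/
def NM : Set WM :=
  {w | (∃ s : ℕ, w = b ^ s) ∨ (∃ s : ℕ, ∃ u ∈ UM, w = b ^ s * u) ∨
    (∃ s t : ℕ, ∃ u ∈ UM, 0 < t ∧ w = b ^ s * u * b ^ t)}

/-- Normal forms for `N`. -/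
def NN : Set WN :=
  {w | (∃ p : ℕ, w = d ^ p) ∨ (∃ p : ℕ, ∃ v ∈ UN, w = d ^ p * v) ∨
    (∃ p q r : ℕ, ∃ v ∈ UN, r ≤ 3 ∧ 0 < q + r ∧ w = d ^ p * v * (d ^ 3 * c) ^ q * d ^ r)}

/-- The substitution `a ↦ c`, `b ↦ d`. -/
def bar : WM →* WN := FreeMonoid.map fun x => match x with | AB.a => CD.c | AB.b => CD.d

/-!
A word of `M` is determined by a leading power `b^s`, a trailing power `b^t` and, if it contains
an `a`, the middle factor `u` from its first to its last `a`. The relations `a b^n a = a b a` only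
collapse the interior blocks of `b`'s in `u` to single `b`'s, so the triple `(s, u, t)`, with `u`
collapsed, is an invariant of the class. Such triples form a monoid `Shape` in which `a b^n a` and
`a b a` have the same image; reading a triple back as the word `b^s u b^t` lands in `N_M`, stays in
the class of the original word, and is the identity on `N_M`.
-/

lemma prod_intersperse_cons_cons (m n : ℕ) (l : List ℕ) :
    (((m :: n :: l).map (a ^ ·)).intersperse b).prod =
      a ^ m * (b * (((n :: l).map (a ^ ·)).intersperse b).prod) := by
  simp [List.intersperse_cons_cons]

lemma a_mem_UM : a ∈ UM := ⟨[1], by simp, by simp, by simp⟩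

lemma a_mul_mem_UM {u : WM} (hu : u ∈ UM) : a * u ∈ UM := by
  obtain ⟨l, hl, hpos, rfl⟩ := hu
  obtain ⟨m, l, rfl⟩ := List.exists_cons_of_ne_nil hl
  refine ⟨(m + 1) :: l, List.cons_ne_nil _ _, ?_, ?_⟩
  · simp only [List.mem_cons, forall_eq_or_imp] at hpos ⊢
    exact ⟨by omega, hpos.2⟩
  · cases l <;> simp [List.intersperse_cons_cons, pow_succ', mul_assoc]

lemma a_mul_b_mul_mem_UM {u : WM} (hu : u ∈ UM) : a * b * u ∈ UM := by
  obtain ⟨l, hl, hpos, rfl⟩ := hu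
  obtain ⟨m, l, rfl⟩ := List.exists_cons_of_ne_nil hl
  refine ⟨1 :: m :: l, List.cons_ne_nil _ _, ?_, ?_⟩
  · simpa using hpos
  · rw [prod_intersperse_cons_cons, pow_one, mul_assoc]

lemma exists_eq_a_mul_of_mem_UM {u : WM} (hu : u ∈ UM) : ∃ v, u = a * v := by
  obtain ⟨l, hl, hpos, rfl⟩ := hu
  obtain ⟨m, l, rfl⟩ := List.exists_cons_of_ne_nil hl
  obtain ⟨k, rfl⟩ := Nat.exists_eq_add_of_le' (hpos m List.mem_cons_self)
  cases l <;> simp [List.intersperse_cons_cons, pow_succ', mul_assoc]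

/-- What survives between two `a`'s separated by `b^k`. -/
def glue (k : ℕ) : WM := if k = 0 then 1 else b

@[simp] lemma glue_zero : glue 0 = 1 := rfl

lemma glue_of_ne_zero {k : ℕ} (hk : k ≠ 0) : glue k = b := if_neg hk

lemma a_mul_glue_mul_mem_UM (k : ℕ) {u : WM} (hu : u ∈ UM) : a * glue k * u ∈ UM := by
  rcases eq_or_ne k 0 with rfl | hk
  · simpa using a_mul_mem_UM hu
  · simpa [glue_of_ne_zero hk] using a_mul_b_mul_mem_UM hu

lemma conGen_a_mul_b_pow_mul_a (k : ℕ) : conGen rM (a * b ^ k * a) (a * glue k * a) := by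
  rcases Nat.lt_or_ge k 2 with hk | hk
  · interval_cases k <;> simpa [glue] using (conGen rM).refl _
  · rw [glue_of_ne_zero (by omega)]
    exact ConGen.Rel.of _ _ ⟨k, hk, rfl, rfl⟩

inductive Shape : Type
  | bpow (n : ℕ)
  | sandwich (s : ℕ) (u : WM) (t : ℕ)

namespace Shape

def mul : Shape → Shape → Shape
  | bpow m, bpow n => bpow (m + n)
  | bpow m, sandwich s u t => sandwich (m + s) u t
  | sandwich s u t, bpow n => sandwich s u (t + n)
  | sandwich s u t, sandwich s' u' t' => sandwich s (u * glue (t + s') * u') t'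

instance : Monoid Shape where
  mul := mul
  one := bpow 0
  one_mul x := by cases x <;> simp [mul, HMul.hMul, Mul.mul]
  mul_one x := by cases x <;> simp [mul, HMul.hMul, Mul.mul]
  mul_assoc x y z := by
    change mul (mul x y) z = mul x (mul y z)
    cases x <;> cases y <;> cases z <;> simp [mul, Nat.add_assoc, _root_.mul_assoc]

@[simp] lemma bpow_mul_bpow (m n : ℕ) : bpow m * bpow n = bpow (m + n) := rfl

@[simp] lemma bpow_mul_sandwich (m s : ℕ) (u : WM) (t : ℕ) :
    bpow m * sandwich s u t = sandwich (m + s) u t := rfl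

@[simp] lemma sandwich_mul_bpow (s : ℕ) (u : WM) (t n : ℕ) :
    sandwich s u t * bpow n = sandwich s u (t + n) := rfl

@[simp] lemma sandwich_mul_sandwich (s : ℕ) (u : WM) (t s' : ℕ) (u' : WM) (t' : ℕ) :
    sandwich s u t * sandwich s' u' t' = sandwich s (u * glue (t + s') * u') t' := rfl

def toWord : Shape → WM
  | bpow n => b ^ n
  | sandwich s u t => b ^ s * u * b ^ t

def IsNormal : Shape → Prop
  | bpow _ => True
  | sandwich _ u _ => u ∈ UM

lemma IsNormal.toWord_mem_NM {z : Shape} (hz : z.IsNormal) : z.toWord ∈ NM := by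
  cases z with
  | bpow n => exact Or.inl ⟨n, rfl⟩
  | sandwich s u t =>
    rcases Nat.eq_zero_or_pos t with rfl | ht
    · exact Or.inr (Or.inl ⟨s, u, hz, by simp [toWord]⟩)
    · exact Or.inr (Or.inr ⟨s, t, u, hz, ht, rfl⟩)

end Shape

open Shape

def shape : WM →* Shape :=
  FreeMonoid.lift fun x => match x with
    | AB.a => sandwich 0 a 0
    | AB.b => bpow 1

@[simp] lemma shape_a : shape a = sandwich 0 a 0 := rfl

@[simp] lemma shape_b : shape b = bpow 1 := rfl

@[simp] lemma shape_b_pow (n : ℕ) : shape (b ^ n) = bpow n := by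
  induction n with
  | zero => rfl
  | succ n ih => rw [pow_succ, map_mul, ih, shape_b, bpow_mul_bpow]

lemma shape_a_pow {n : ℕ} (hn : n ≠ 0) : shape (a ^ n) = sandwich 0 (a ^ n) 0 := by
  induction n with
  | zero => exact absurd rfl hn
  | succ n ih =>
    rcases eq_or_ne n 0 with rfl | hn'
    · simp
    · rw [pow_succ, map_mul, ih hn', shape_a, sandwich_mul_sandwich, glue_zero, mul_one]

lemma shape_of_mem_UM {u : WM} (hu : u ∈ UM) : shape u = sandwich 0 u 0 := by
  obtain ⟨l, hl, hpos, rfl⟩ := hu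
  induction l with
  | nil => exact absurd rfl hl
  | cons m l ih =>
    have hm : m ≠ 0 := Nat.one_le_iff_ne_zero.mp (hpos m List.mem_cons_self)
    cases l with
    | nil => simpa using shape_a_pow hm
    | cons n l =>
      rw [prod_intersperse_cons_cons, map_mul, map_mul,
        ih (List.cons_ne_nil _ _) fun i hi => hpos i (List.mem_cons_of_mem _ hi),
        shape_a_pow hm, shape_b, bpow_mul_sandwich, sandwich_mul_sandwich,
        glue_of_ne_zero (by omega), mul_assoc]

lemma toWord_shape_of_mem_NM {w : WM} (hw : w ∈ NM) : (shape w).toWord = w := by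
  rcases hw with ⟨s, rfl⟩ | ⟨s, u, hu, rfl⟩ | ⟨s, t, u, hu, -, rfl⟩
  · simp [toWord]
  · simp [shape_of_mem_UM hu, toWord]
  · simp [shape_of_mem_UM hu, toWord]

lemma shape_a_mul_b_pow_mul_a (n : ℕ) :
    shape (a * b ^ n * a) = sandwich 0 (a * glue n * a) 0 := by
  simp

lemma shape_eq_of_conGen {x y : WM} (h : conGen rM x y) : shape x = shape y := by
  have hle : conGen rM ≤ Con.ker shape := by
    refine Con.conGen_le.mpr ?_
    rintro _ _ ⟨n, hn, rfl, rfl⟩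
    rw [Con.ker_rel, shape_a_mul_b_pow_mul_a, ← pow_one b, shape_a_mul_b_pow_mul_a,
      glue_of_ne_zero (by omega), glue_of_ne_zero one_ne_zero]
  exact (Con.ker_rel shape).mp (hle h)

lemma isNormal_shape (w : WM) : (shape w).IsNormal := by
  induction w using FreeMonoid.inductionOn' with
  | one => trivial
  | of_mul x w ih =>
    rw [map_mul]
    generalize shape w = z at ih
    cases x with
    | b =>
      change (bpow 1 * z).IsNormal
      cases z with
      | bpow n => trivial
      | sandwich s u t => exact ih
    | a =>
      change (sandwich 0 a 0 * z).IsNormal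
      cases z with
      | bpow n => exact a_mem_UM
      | sandwich s u t => simpa [IsNormal] using a_mul_glue_mul_mem_UM s ih

lemma conGen_toWord_shape_of_mul {z : Shape} (hz : z.IsNormal) (x : AB) :
    conGen rM (shape (.of x) * z).toWord (.of x * z.toWord) := by
  cases x with
  | b =>
    change conGen rM (bpow 1 * z).toWord (b * z.toWord)
    cases z <;> simpa [toWord, add_comm 1, pow_succ', mul_assoc] using (conGen rM).refl _
  | a =>
    change conGen rM (sandwich 0 a 0 * z).toWord (a * z.toWord)
    cases z with
    | bpow n => simpa [toWord] using (conGen rM).refl _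
    | sandwich s u t =>
      obtain ⟨v, rfl⟩ := exists_eq_a_mul_of_mem_UM hz
      have h := (conGen rM).mul ((conGen rM).mul (conGen_a_mul_b_pow_mul_a s) ((conGen rM).refl v))
        ((conGen rM).refl (b ^ t))
      simpa [toWord, mul_assoc] using (conGen rM).symm h

lemma conGen_toWord_shape (w : WM) : conGen rM (shape w).toWord w := by
  induction w using FreeMonoid.inductionOn' with
  | one => exact (conGen rM).refl 1
  | of_mul x w ih =>
    rw [map_mul]
    exact (conGen rM).trans (conGen_toWord_shape_of_mul (isNormal_shape w) x)
      ((conGen rM).mul ((conGen rM).refl _) ih)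

/-- Every element of `M` is represented by exactly one word in `N_M`. -/
theorem stmt8 (x : (conGen rM).Quotient) :
    ∃! w : WM, w ∈ NM ∧ (conGen rM).mk' w = x := by
  obtain ⟨w, rfl⟩ := Con.mk'_surjective x
  refine ⟨(shape w).toWord, ⟨(isNormal_shape w).toWord_mem_NM,
    (Con.eq _).mpr (conGen_toWord_shape w)⟩, ?_⟩
  rintro y ⟨hy, hyw⟩
  rw [← toWord_shape_of_mem_NM hy, shape_eq_of_conGen ((Con.eq _).mp hyw)]
end

section
/- In the monoid N = ⟨c, d | cdc = cd²c = cd⁴ = cd³c² = cd³cdc⟩, for every v ∈ U_N and q ≥ 0, the equality v (d³c)^q d⁴ = v d c holds in N. -/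
open Relation

lemma conGen_rN_c_mul_d_pow_four : conGen rN (c * d ^ 4) (c * d * c) :=
  ConGen.Rel.of _ _ ⟨Or.inr (Or.inl rfl), rfl⟩

lemma conGen_rN_c_mul_d_pow_three_mul_cdc : conGen rN (c * d ^ 3 * (c * d * c)) (c * d * c) :=
  ConGen.Rel.of _ _ ⟨Or.inr (Or.inr (Or.inr rfl)), rfl⟩

/-- Each factor `d³c` is absorbed by `c d³ (c d c) = c d c`, starting from `c d⁴ = c d c`. -/
lemma conGen_rN_c_mul_d_pow_three_mul_c_pow_mul_d_pow_four (q : ℕ) :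
    conGen rN (c * (d ^ 3 * c) ^ q * d ^ 4) (c * d * c) := by
  induction q with
  | zero => simpa using conGen_rN_c_mul_d_pow_four
  | succ q ih =>
    have hsplit : c * (d ^ 3 * c) ^ (q + 1) * d ^ 4 = c * d ^ 3 * (c * (d ^ 3 * c) ^ q * d ^ 4) := by
      simp only [pow_succ', mul_assoc]
    rw [hsplit]
    exact ((conGen rN).mul (Con.refl _ _) ih).trans conGen_rN_c_mul_d_pow_three_mul_cdc

lemma exists_eq_mul_c_of_mem_UN {v : WN} (hv : v ∈ UN) : ∃ w, v = w * c := by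
  obtain ⟨l, hne, hpos, rfl⟩ := hv
  induction l with
  | nil => exact absurd rfl hne
  | cons i t ih =>
    cases t with
    | nil =>
      refine ⟨c ^ (i - 1), ?_⟩
      simp only [List.map_cons, List.map_nil, List.intersperse_singleton, List.prod_singleton]
      rw [← pow_succ, Nat.sub_add_cancel (hpos i List.mem_cons_self)]
    | cons j t =>
      obtain ⟨w, hw⟩ := ih (List.cons_ne_nil _ _) fun x hx => hpos x (List.mem_cons_of_mem _ hx)
      refine ⟨c ^ i * d * w, ?_⟩
      rw [List.map_cons] at hw
      rw [List.map_cons, List.map_cons, List.intersperse_cons_cons, List.prod_cons, List.prod_cons, hw,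
        mul_assoc, mul_assoc]

/-- In `N`, for `v ∈ U_N`, `q ≥ 0`: `v (d³c)^q d⁴ = v d c`. -/
theorem stmt12 (v : WN) (hv : v ∈ UN) (q : ℕ) :
    conGen rN (v * (d ^ 3 * c) ^ q * d ^ 4) (v * d * c) := by
  obtain ⟨w, rfl⟩ := exists_eq_mul_c_of_mem_UN hv
  have h := (conGen rN).mul (Con.refl _ w) (conGen_rN_c_mul_d_pow_three_mul_c_pow_mul_d_pow_four q)
  simpa only [mul_assoc] using h
end

section
/- The map f from the normal forms of M to the normal forms of N defined by f(b^s) = d^s, f(b^s u) = d^s ū, and f(b^s u b^t) = d^s ū (d³c)^q d^r where t = 4q + r with 0 ≤ r ≤ 3, is a bijection from N_M onto N_N. Here ū denotes the word obtained from u by substituting a ↦ c and b ↦ d. -/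
/-!
A normal form `b^s u b^t` of `M` is recorded by the triple `(s, u, t)`, and `f` sends it to
`d^s ū (d³c)^(t/4) d^(t%4)`. Both encodings of triples are injective: the leading and trailing
powers of `b` (resp. `d`) are peeled off because `u` and `ū` begin and end with `a` (resp. `c`),
and then the power of `d³c` is determined because `ū` has no factor `dd`. As `ū` ranges over `U_N`
when `u` ranges over `U_M`, the images of the two encodings are `N_M` and `N_N`, and `f` is the
second encoding composed with the inverse of the first.
-/

open Relation

open List
open FreeMonoid (of toList_mul toList_of)

theorem List.map_intersperse {α β : Type*} (f : α → β) (s : α) :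
    ∀ l : List α, (l.intersperse s).map f = (l.map f).intersperse (f s)
  | [] | [_] => rfl
  | x :: y :: l => by
    rw [intersperse_cons_cons, map_cons, map_cons, map_intersperse f s (y :: l)]
    rfl

theorem Set.InjOn.bijOn_comp_invFunOn {α β γ : Type*} [Nonempty α] {s : Set α} {g : α → β}
    {h : α → γ} (hg : s.InjOn g) (hh : s.InjOn h) :
    Set.BijOn (h ∘ Function.invFunOn g s) (g '' s) (h '' s) :=
  hh.bijOn_image.comp (Set.BijOn.symm hg.bijOn_image.invOn_invFunOn.symm hg.bijOn_image)

section Words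

variable {α : Type*} {x y : α}

theorem FreeMonoid.toList_of_pow (x : α) (n : ℕ) : (of x ^ n).toList = replicate n x := by
  induction n with
  | zero => rfl
  | succ n ih => rw [pow_succ, toList_mul, ih, toList_of, replicate_succ']

/-- The words `x^{i₀} y x^{i₁} y ⋯ y x^{i_k}` (all `i_j ≥ 1`) of `UM` and `UN` have this shape. -/
def IsBlockWord (x y : α) (w : FreeMonoid α) : Prop :=
  w.toList.head? = some x ∧ w.toList.getLast? = some x ∧
    w.toList.IsChain fun p q => p ≠ y ∨ q ≠ y

theorem isBlockWord_prod_intersperse (hxy : x ≠ y) :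
    ∀ l : List ℕ, l ≠ [] → (∀ i ∈ l, 1 ≤ i) →
      IsBlockWord x y ((l.map (of x ^ ·)).intersperse (of y)).prod
  | [], hl, _ => absurd rfl hl
  | [i], _, hpos => by
    obtain ⟨k, rfl⟩ := Nat.exists_eq_add_of_le' (hpos i (mem_singleton_self i))
    simp only [map_cons, map_nil, intersperse_singleton, prod_singleton, IsBlockWord,
      FreeMonoid.toList_of_pow]
    exact ⟨by simp [replicate_succ], by simp [getLast?_replicate],
      isChain_replicate_of_rel _ (Or.inl hxy)⟩
  | i :: j :: t, _, hpos => by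
    obtain ⟨hhead, hlast, hchain⟩ := isBlockWord_prod_intersperse hxy (j :: t) (cons_ne_nil _ _)
      fun k hk => hpos k (mem_cons_of_mem _ hk)
    obtain ⟨k, rfl⟩ := Nat.exists_eq_add_of_le' (hpos i mem_cons_self)
    rw [map_cons, map_cons, intersperse_cons_cons, ← map_cons, prod_cons, prod_cons]
    generalize ((map (of x ^ ·) (j :: t)).intersperse (of y)).prod = w at hhead hlast hchain ⊢
    obtain ⟨w', hw⟩ : ∃ w', w.toList = x :: w' := by
      cases h : w.toList with
      | nil => simp [h] at hhead
      | cons z w' => exact ⟨w', by simpa [h] using hhead⟩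
    simp only [IsBlockWord, toList_mul, toList_of, FreeMonoid.toList_of_pow, hw] at hlast hchain ⊢
    refine ⟨by simp [replicate_succ], by simpa using hlast, ?_⟩
    simp only [isChain_append, hchain, getLast?_replicate]
    simpa [hxy] using isChain_replicate_of_rel (k + 1) (r := fun p q => p ≠ y ∨ q ≠ y) (.inl hxy)

theorem FreeMonoid.eq_of_of_pow_mul_eq {s₁ s₂ : ℕ} {w₁ w₂ : FreeMonoid α}
    (h₁ : w₁.toList.head? ≠ some y) (h₂ : w₂.toList.head? ≠ some y)
    (h : of y ^ s₁ * w₁ = of y ^ s₂ * w₂) : s₁ = s₂ ∧ w₁ = w₂ := by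
  induction s₁ generalizing s₂ with
  | zero =>
    cases s₂ with
    | zero => simpa using h
    | succ s₂ =>
      rw [pow_zero, one_mul] at h
      exact absurd (by rw [h, pow_succ', mul_assoc]; rfl) h₁
  | succ s₁ ih =>
    cases s₂ with
    | zero =>
      rw [pow_zero, one_mul] at h
      exact absurd (by rw [← h, pow_succ', mul_assoc]; rfl) h₂
    | succ s₂ =>
      rw [pow_succ', pow_succ', mul_assoc, mul_assoc] at h
      simpa using ih (mul_left_cancel h)

theorem FreeMonoid.eq_of_mul_of_pow_eq {s₁ s₂ : ℕ} {w₁ w₂ : FreeMonoid α}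
    (h₁ : w₁.toList.getLast? ≠ some y) (h₂ : w₂.toList.getLast? ≠ some y)
    (h : w₁ * of y ^ s₁ = w₂ * of y ^ s₂) : w₁ = w₂ ∧ s₁ = s₂ := by
  induction s₁ generalizing s₂ with
  | zero =>
    cases s₂ with
    | zero => simpa using h
    | succ s₂ =>
      rw [pow_zero, mul_one] at h
      exact absurd (by simp [h, pow_succ, ← mul_assoc]) h₁
  | succ s₁ ih =>
    cases s₂ with
    | zero =>
      rw [pow_zero, mul_one] at h
      exact absurd (by simp [← h, pow_succ, ← mul_assoc]) h₂
    | succ s₂ =>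
      rw [pow_succ, pow_succ, ← mul_assoc, ← mul_assoc] at h
      simpa using ih (mul_right_cancel h)

def normalWord (x y : α) (p : ℕ) (v : FreeMonoid α) (q r : ℕ) : FreeMonoid α :=
  of y ^ p * v * (of y ^ 3 * of x) ^ q * of y ^ r

theorem toList_mul_pow_succ (w : FreeMonoid α) (k : ℕ) :
    (w * (of y ^ 3 * of x) ^ (k + 1)).toList =
      w.toList ++ y :: y :: y :: x :: ((of y ^ 3 * of x) ^ k).toList := by
  simp [pow_succ', toList_mul]

theorem not_isBlockWord_mul_pow_succ (w : FreeMonoid α) (k : ℕ) :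
    ¬ IsBlockWord x y (w * (of y ^ 3 * of x) ^ (k + 1)) := fun ⟨_, _, hchain⟩ => by
  rw [toList_mul_pow_succ] at hchain
  simpa using hchain.right_of_append

theorem eq_of_isBlockWord_mul_pow_eq {v₁ v₂ : FreeMonoid α} {q₁ q₂ : ℕ}
    (hv₁ : IsBlockWord x y v₁ ∨ v₁ = 1 ∧ q₁ = 0) (hv₂ : IsBlockWord x y v₂ ∨ v₂ = 1 ∧ q₂ = 0)
    (h : v₁ * (of y ^ 3 * of x) ^ q₁ = v₂ * (of y ^ 3 * of x) ^ q₂) : v₁ = v₂ ∧ q₁ = q₂ := by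
  wlog hq : q₁ ≤ q₂ generalizing v₁ v₂ q₁ q₂
  · exact (this hv₂ hv₁ h.symm (le_of_not_ge hq)).imp Eq.symm Eq.symm
  obtain ⟨_ | k, rfl⟩ := Nat.exists_eq_add_of_le hq
  · exact ⟨mul_right_cancel h, rfl⟩
  rw [add_comm, pow_add, ← mul_assoc] at h
  have hv : v₁ = v₂ * (of y ^ 3 * of x) ^ (k + 1) := mul_right_cancel h
  rcases hv₁ with hv₁ | ⟨rfl, -⟩
  · exact absurd (hv ▸ hv₁) (not_isBlockWord_mul_pow_succ _ _)
  · have := congrArg FreeMonoid.toList hv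
    rw [toList_mul_pow_succ] at this
    simp at this

theorem normalWord_injective (hxy : x ≠ y) {p₁ p₂ q₁ q₂ r₁ r₂ : ℕ} {v₁ v₂ : FreeMonoid α}
    (hv₁ : IsBlockWord x y v₁ ∨ v₁ = 1 ∧ q₁ = 0 ∧ r₁ = 0)
    (hv₂ : IsBlockWord x y v₂ ∨ v₂ = 1 ∧ q₂ = 0 ∧ r₂ = 0)
    (h : normalWord x y p₁ v₁ q₁ r₁ = normalWord x y p₂ v₂ q₂ r₂) :
    p₁ = p₂ ∧ v₁ = v₂ ∧ q₁ = q₂ ∧ r₁ = r₂ := by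
  have head_ne {v : FreeMonoid α} {q r : ℕ} (hv : IsBlockWord x y v ∨ v = 1 ∧ q = 0 ∧ r = 0) :
      (v * (of y ^ 3 * of x) ^ q * of y ^ r).toList.head? ≠ some y := by
    rcases hv with ⟨hhead, -⟩ | ⟨rfl, rfl, rfl⟩
    · simp [toList_mul, hhead, hxy]
    · simp
  have getLast_ne {v : FreeMonoid α} {q : ℕ} (hv : IsBlockWord x y v ∨ v = 1 ∧ q = 0) :
      (v * (of y ^ 3 * of x) ^ q).toList.getLast? ≠ some y := by
    rcases q with _ | k
    · rcases hv with ⟨-, hlast, -⟩ | ⟨rfl, -⟩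
      · simp [hlast, hxy]
      · simp
    · simp [pow_succ, toList_mul, hxy]
  have hv₁' := hv₁.imp_right (And.imp_right And.left)
  have hv₂' := hv₂.imp_right (And.imp_right And.left)
  unfold normalWord at h
  simp only [mul_assoc] at h
  obtain ⟨hp, h⟩ := FreeMonoid.eq_of_of_pow_mul_eq (by simpa [mul_assoc] using head_ne hv₁)
    (by simpa [mul_assoc] using head_ne hv₂) h
  simp only [← mul_assoc] at h
  obtain ⟨h, hr⟩ := FreeMonoid.eq_of_mul_of_pow_eq (getLast_ne hv₁') (getLast_ne hv₂') h
  obtain ⟨hv, hq⟩ := eq_of_isBlockWord_mul_pow_eq hv₁' hv₂' h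
  exact ⟨hp, hv, hq, hr⟩

end Words

theorem AB.a_ne_b : AB.a ≠ AB.b := nofun

theorem CD.c_ne_d : CD.c ≠ CD.d := nofun

theorem isBlockWord_of_mem_UM {u : WM} (hu : u ∈ UM) : IsBlockWord AB.a AB.b u := by
  obtain ⟨l, hl, hpos, rfl⟩ := hu
  exact isBlockWord_prod_intersperse AB.a_ne_b l hl hpos

theorem isBlockWord_of_mem_UN {v : WN} (hv : v ∈ UN) : IsBlockWord CD.c CD.d v := by
  obtain ⟨l, hl, hpos, rfl⟩ := hv
  exact isBlockWord_prod_intersperse CD.c_ne_d l hl hpos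

theorem bar_injective : Function.Injective bar := by
  have letter_injective :
      Function.Injective fun x => match x with | AB.a => CD.c | AB.b => CD.d := by
    rintro (_ | _) (_ | _) h <;> first | rfl | cases h
  exact fun u₁ u₂ h ↦ FreeMonoid.toList.injective <|
    List.map_injective_iff.2 letter_injective (congrArg FreeMonoid.toList h)

theorem bar_prod_intersperse (l : List ℕ) :
    bar ((l.map (a ^ ·)).intersperse b).prod = ((l.map (c ^ ·)).intersperse d).prod := by
  rw [map_list_prod, List.map_intersperse, List.map_map]
  simp only [Function.comp_def, map_pow]
  rfl

theorem bar_image_UM : bar '' UM = UN := by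
  ext v
  constructor
  · rintro ⟨_, ⟨l, hl, hpos, rfl⟩, rfl⟩
    exact ⟨l, hl, hpos, bar_prod_intersperse l⟩
  · rintro ⟨l, hl, hpos, rfl⟩
    exact ⟨_, ⟨l, hl, hpos, rfl⟩, bar_prod_intersperse l⟩

/-- `(s, u, t)` stands for the normal form `b^s u b^t` of `M`, with `u = 1` allowed only for
`t = 0`. -/
def nfParams : Set (ℕ × WM × ℕ) := {p | p.2.1 ∈ UM ∨ p.2.1 = 1 ∧ p.2.2 = 0}

def nfM (p : ℕ × WM × ℕ) : WM := b ^ p.1 * p.2.1 * b ^ p.2.2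

def nfN (p : ℕ × WM × ℕ) : WN := d ^ p.1 * bar p.2.1 * (d ^ 3 * c) ^ (p.2.2 / 4) * d ^ (p.2.2 % 4)

theorem nfM_eq_normalWord (s : ℕ) (u : WM) (t : ℕ) :
    nfM (s, u, t) = normalWord AB.a AB.b s u 0 t := by
  simp only [nfM, normalWord, pow_zero, mul_one]
  rfl

theorem nfN_eq_normalWord (s : ℕ) (u : WM) (t : ℕ) :
    nfN (s, u, t) = normalWord CD.c CD.d s (bar u) (t / 4) (t % 4) := rfl

theorem nfM_injOn : Set.InjOn nfM nfParams := by
  rintro ⟨s₁, u₁, t₁⟩ hp₁ ⟨s₂, u₂, t₂⟩ hp₂ h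
  rw [nfM_eq_normalWord, nfM_eq_normalWord] at h
  obtain ⟨rfl, rfl, -, rfl⟩ := normalWord_injective AB.a_ne_b
    (hp₁.imp isBlockWord_of_mem_UM fun h ↦ ⟨h.1, rfl, h.2⟩)
    (hp₂.imp isBlockWord_of_mem_UM fun h ↦ ⟨h.1, rfl, h.2⟩) h
  rfl

theorem nfN_injOn : Set.InjOn nfN nfParams := by
  have admissible {u : WM} {t : ℕ} (hp : u ∈ UM ∨ u = 1 ∧ t = 0) :
      IsBlockWord CD.c CD.d (bar u) ∨ bar u = 1 ∧ t / 4 = 0 ∧ t % 4 = 0 := by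
    rcases hp with hu | ⟨rfl, rfl⟩
    · exact .inl (isBlockWord_of_mem_UN (bar_image_UM ▸ Set.mem_image_of_mem bar hu))
    · simp
  rintro ⟨s₁, u₁, t₁⟩ hp₁ ⟨s₂, u₂, t₂⟩ hp₂ h
  rw [nfN_eq_normalWord, nfN_eq_normalWord] at h
  obtain ⟨rfl, hu, hq, hr⟩ := normalWord_injective CD.c_ne_d
    (admissible (u := u₁) (t := t₁) hp₁) (admissible (u := u₂) (t := t₂) hp₂) h
  rw [bar_injective hu, show t₁ = t₂ by omega]

theorem NM_eq_image : NM = nfM '' nfParams := by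
  ext w
  constructor
  · rintro (⟨s, rfl⟩ | ⟨s, u, hu, rfl⟩ | ⟨s, t, u, hu, -, rfl⟩)
    · exact ⟨(s, 1, 0), .inr ⟨rfl, rfl⟩, by simp [nfM]⟩
    · exact ⟨(s, u, 0), .inl hu, by simp [nfM]⟩
    · exact ⟨(s, u, t), .inl hu, rfl⟩
  · rintro ⟨⟨s, u, t⟩, hu | ⟨rfl, rfl⟩, rfl⟩
    · rcases Nat.eq_zero_or_pos t with rfl | ht
      · exact .inr (.inl ⟨s, u, hu, by simp [nfM]⟩)
      · exact .inr (.inr ⟨s, t, u, hu, ht, rfl⟩)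
    · exact .inl ⟨s, by simp [nfM]⟩

theorem NN_eq_image : NN = nfN '' nfParams := by
  ext w
  constructor
  · rintro (⟨p, rfl⟩ | ⟨p, v, hv, rfl⟩ | ⟨p, q, r, v, hv, hr, -, rfl⟩)
    · exact ⟨(p, 1, 0), .inr ⟨rfl, rfl⟩, by simp [nfN]⟩
    · obtain ⟨u, hu, rfl⟩ := bar_image_UM.symm ▸ hv
      exact ⟨(p, u, 0), .inl hu, by simp [nfN]⟩
    · obtain ⟨u, hu, rfl⟩ := bar_image_UM.symm ▸ hv
      refine ⟨(p, u, 4 * q + r), .inl hu, ?_⟩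
      simp only [nfN, show (4 * q + r) / 4 = q by omega, show (4 * q + r) % 4 = r by omega]
  · have hbar {u : WM} (hu : u ∈ UM) : bar u ∈ UN := bar_image_UM ▸ Set.mem_image_of_mem bar hu
    rintro ⟨⟨s, u, t⟩, hu | ⟨rfl, rfl⟩, rfl⟩
    · rcases Nat.eq_zero_or_pos t with rfl | ht
      · exact .inr (.inl ⟨s, bar u, hbar hu, by simp [nfN]⟩)
      · exact .inr (.inr ⟨s, t / 4, t % 4, bar u, hbar hu, by omega, by omega, rfl⟩)
    · exact .inl ⟨s, by simp [nfN]⟩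

/-- The map `f` sending `b^s ↦ d^s`, `b^s u ↦ d^s ū`, and `b^s u b^t ↦ d^s ū (d³c)^q d^r`
(where `t = 4q + r`, `0 ≤ r ≤ 3`) is a bijection from `N_M` onto `N_N`. -/
theorem stmt13 :
    ∃ f : WM → WN, Set.BijOn f NM NN ∧
      (∀ s : ℕ, f (b ^ s) = d ^ s) ∧
      (∀ s : ℕ, ∀ u ∈ UM, f (b ^ s * u) = d ^ s * bar u) ∧
      (∀ s t : ℕ, ∀ u ∈ UM, 0 < t →
        f (b ^ s * u * b ^ t) = d ^ s * bar u * (d ^ 3 * c) ^ (t / 4) * d ^ (t % 4)) := by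
  have hf {s : ℕ} {u : WM} {t : ℕ} (hp : (s, u, t) ∈ nfParams) :
      (nfN ∘ Function.invFunOn nfM nfParams) (b ^ s * u * b ^ t) =
        d ^ s * bar u * (d ^ 3 * c) ^ (t / 4) * d ^ (t % 4) :=
    show nfN (Function.invFunOn nfM nfParams (nfM (s, u, t))) = nfN (s, u, t) by
      rw [nfM_injOn.leftInvOn_invFunOn hp]
  refine ⟨nfN ∘ Function.invFunOn nfM nfParams, ?_, fun s ↦ ?_, fun s u hu ↦ ?_,
    fun s t u hu _ ↦ hf (.inl hu)⟩
  · rw [NM_eq_image, NN_eq_image]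
    exact nfM_injOn.bijOn_comp_invFunOn nfN_injOn
  · simpa using hf (s := s) (u := 1) (t := 0) (.inr ⟨rfl, rfl⟩)
  · simpa using hf (s := s) (t := 0) (.inl hu)
end
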